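/- Let n ≥ 4 and suppose candidate 1 and candidate 2^{n−1}+1 are two top seeds who are only allowed to meet in the final round, i.e., brackets π must place these two candidates in opposite halves (the positions of 1 and 2^{n−1}+1 in π are not in the same half {1,…,2^{n−1}} or {2^{n−1}+1,…,2^n}). Then for every candidate i ∈ [2^n] there exists such a constrained bracket π with w_n(η_{n−3}, π) = i. -/

import Mathlib

/-- One knockout round: adjacent pairs play and the winners survive. -/
def roundStep (beats : ℕ → ℕ → Bool) : List ℕ → List ℕ
  | a :: b :: rest => (if beats a b then a else b) :: roundStep beats rest
  | l => l

/-- The winner of the single-elimination knockout tournament with bracket `π`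
(a list of length `2^n`), pairwise challenges decided by `beats`. -/
def knockWinner (n : ℕ) (beats : ℕ → ℕ → Bool) (π : List ℕ) : ℕ :=
  ((roundStep beats)^[n] π).headI

/-- The arrows of the tournament `η₀` on `{1,…,8}`. -/
def eta0Pairs : List (ℕ × ℕ) :=
  [(1,2),(1,3),(1,5),(2,3),(2,4),(2,6),(2,7),
   (3,4),(3,5),(3,6),(3,8),(4,1),(4,5),(4,8),
   (5,2),(5,6),(5,7),(6,1),(6,4),(6,7),(6,8),
   (7,1),(7,3),(7,4),(7,8),(8,1),(8,2),(8,5)]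

/-- The tournament `η₀` on `{1,…,8}`: `eta0 i j = true` iff `i ▷ j`. -/
def eta0 (i j : ℕ) : Bool := decide ((i, j) ∈ eta0Pairs)

/-- The recursively defined tournaments: `eta n` is the tournament `η_n` on
`{1,…,2^(n+3)}`, `eta n i j = true` meaning `i ▷ j`. -/
def eta : ℕ → ℕ → ℕ → Bool
  | 0, i, j => eta0 i j
  | n+1, i, j =>
    if i ≤ 2^(n+3) ∧ j ≤ 2^(n+3) then eta n i j
    else if 2^(n+3) < i ∧ 2^(n+3) < j then eta n (i - 2^(n+3)) (j - 2^(n+3))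
    else if i ≤ 2^(n+3) then decide ((i + j) % 2 = 0)
    else decide ((i + j) % 2 = 1)



/-!
Write `N = 2^(m+3)`. Under `η_{m+1}` the two halves `[N]` and `N + [N]` are copies of `η_m`, and a
lower candidate `x` beats an upper candidate `N + y` exactly when `x + y` is even. So if every
candidate can win an `η_m` bracket, then putting a bracket of the lower half in front of a shifted
bracket of the upper half lets `i ≤ N` win (both halves won by `i`, same parity) and lets `N + i'`
win (the lower half won by a candidate of parity opposite to `i'`). These brackets always keep `1`
and `N + 1` in opposite halves. The base case `η₀` is checked on explicit brackets.
-/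

theorem mem_range'_one_iff {x N : ℕ} : x ∈ List.range' 1 N ↔ 1 ≤ x ∧ x ≤ N := by
  rw [List.mem_range'_1]
  omega

section Knockout

variable (b b' : ℕ → ℕ → Bool)

theorem length_roundStep : ∀ l : List ℕ, (roundStep b l).length = (l.length + 1) / 2
  | [] => rfl
  | [_] => by simp [roundStep]
  | a :: c :: rest => by
    simp only [roundStep, List.length_cons, length_roundStep rest]
    omega

theorem roundStep_sublist : ∀ l : List ℕ, (roundStep b l).Sublist l
  | [] => .slnil
  | [_] => .refl _
  | a :: c :: rest => by
    rw [roundStep]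
    split
    · exact ((roundStep_sublist rest).cons c).cons_cons a
    · exact ((roundStep_sublist rest).cons_cons c).cons a

theorem roundStep_append :
    ∀ l₁ l₂ : List ℕ, Even l₁.length →
      roundStep b (l₁ ++ l₂) = roundStep b l₁ ++ roundStep b l₂
  | [], _, _ => rfl
  | [_], _, h => by simp at h
  | a :: c :: rest, l₂, h => by
    simp only [List.cons_append, roundStep,
      roundStep_append rest l₂ (by simpa [Nat.even_add_one] using h)]

theorem roundStep_map (f : ℕ → ℕ) : ∀ l : List ℕ,
    (∀ x ∈ l, ∀ y ∈ l, b' (f x) (f y) = b x y) →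
      roundStep b' (l.map f) = (roundStep b l).map f
  | [], _ => rfl
  | [_], _ => rfl
  | a :: c :: rest, h => by
    simp only [List.map_cons, roundStep, h a (by simp) c (by simp), apply_ite f,
      roundStep_map f rest (fun x hx y hy => h x (by simp [hx]) y (by simp [hy]))]

variable (k : ℕ)

theorem length_iterate_roundStep {l : List ℕ} (hl : l.length = 2^k) :
    ((roundStep b)^[k] l).length = 1 := by
  induction k generalizing l with
  | zero => simpa using hl
  | succ k ih =>
    rw [Function.iterate_succ_apply]
    exact ih (by rw [length_roundStep, hl, pow_succ]; omega)

theorem iterate_roundStep_sublist (l : List ℕ) : ((roundStep b)^[k] l).Sublist l := by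
  induction k generalizing l with
  | zero => exact .refl l
  | succ k ih =>
    rw [Function.iterate_succ_apply]
    exact (ih _).trans (roundStep_sublist b l)

theorem iterate_roundStep_append {l₁ : List ℕ} (h₁ : l₁.length = 2^k) (l₂ : List ℕ) :
    (roundStep b)^[k] (l₁ ++ l₂) = (roundStep b)^[k] l₁ ++ (roundStep b)^[k] l₂ := by
  induction k generalizing l₁ l₂ with
  | zero => rfl
  | succ k ih =>
    have hev : Even l₁.length := ⟨2^k, by rw [h₁, pow_succ, mul_two]⟩
    simp only [Function.iterate_succ_apply, roundStep_append b l₁ l₂ hev]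
    exact ih (by rw [length_roundStep, h₁, pow_succ]; omega) _

theorem iterate_roundStep_map (f : ℕ → ℕ) (l : List ℕ)
    (h : ∀ x ∈ l, ∀ y ∈ l, b' (f x) (f y) = b x y) :
    (roundStep b')^[k] (l.map f) = ((roundStep b)^[k] l).map f := by
  induction k generalizing l with
  | zero => rfl
  | succ k ih =>
    have hsub : ∀ {x}, x ∈ roundStep b l → x ∈ l := (roundStep_sublist b l).mem
    rw [Function.iterate_succ_apply, Function.iterate_succ_apply, roundStep_map b b' f l h]
    exact ih _ fun x hx y hy => h x (hsub hx) y (hsub hy)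

theorem knockWinner_mem {l : List ℕ} (hl : l.length = 2^k) : knockWinner k b l ∈ l := by
  obtain ⟨w, hw⟩ := List.length_eq_one_iff.mp (length_iterate_roundStep b k hl)
  have hw_mem : w ∈ (roundStep b)^[k] l := by simp [hw]
  rw [knockWinner, hw]
  exact (iterate_roundStep_sublist b k l).mem hw_mem

theorem knockWinner_map (f : ℕ → ℕ) {l : List ℕ} (hl : l.length = 2^k)
    (h : ∀ x ∈ l, ∀ y ∈ l, b' (f x) (f y) = b x y) :
    knockWinner k b' (l.map f) = f (knockWinner k b l) := by
  obtain ⟨w, hw⟩ := List.length_eq_one_iff.mp (length_iterate_roundStep b k hl)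
  rw [knockWinner, knockWinner, iterate_roundStep_map b b' k f l h, hw]
  rfl

theorem knockWinner_congr (l : List ℕ) (h : ∀ x ∈ l, ∀ y ∈ l, b x y = b' x y) :
    knockWinner k b l = knockWinner k b' l := by
  have := iterate_roundStep_map b b' k id l fun x hx y hy => (h x hx y hy).symm
  rw [List.map_id, List.map_id] at this
  rw [knockWinner, knockWinner, this]

theorem knockWinner_succ_append {l₁ l₂ : List ℕ} (h₁ : l₁.length = 2^k)
    (h₂ : l₂.length = 2^k) :
    knockWinner (k+1) b (l₁ ++ l₂) =
      if b (knockWinner k b l₁) (knockWinner k b l₂) then knockWinner k b l₁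
      else knockWinner k b l₂ := by
  obtain ⟨w₁, hw₁⟩ := List.length_eq_one_iff.mp (length_iterate_roundStep b k h₁)
  obtain ⟨w₂, hw₂⟩ := List.length_eq_one_iff.mp (length_iterate_roundStep b k h₂)
  simp only [knockWinner, Function.iterate_succ_apply', iterate_roundStep_append b k h₁,
    hw₁, hw₂]
  rfl

end Knockout

section Eta

variable {m x y : ℕ}

theorem eta_succ_of_le (hx : x ≤ 2^(m+3)) (hy : y ≤ 2^(m+3)) : eta (m+1) x y = eta m x y := by
  rw [eta, if_pos ⟨hx, hy⟩]

theorem eta_succ_add_add (hx : 0 < x) (hy : 0 < y) :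
    eta (m+1) (2^(m+3) + x) (2^(m+3) + y) = eta m x y := by
  rw [eta, if_neg (by omega), if_pos ⟨by omega, by omega⟩, Nat.add_sub_cancel_left,
    Nat.add_sub_cancel_left]

theorem eta_succ_of_le_of_lt (hx : x ≤ 2^(m+3)) (hy : 2^(m+3) < y) :
    eta (m+1) x y = decide ((x + y) % 2 = 0) := by
  rw [eta, if_neg (by omega), if_neg (by omega), if_pos hx]

end Eta

section Brackets

variable {N : ℕ} {σ τ : List ℕ}

theorem perm_append_map_add (hσ : σ.Perm (List.range' 1 N)) (hτ : τ.Perm (List.range' 1 N)) :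
    (σ ++ τ.map (N + ·)).Perm (List.range' 1 (N + N)) := by
  have hτ' := hτ.map (N + ·)
  rw [List.map_add_range', add_comm N 1] at hτ'
  rw [← List.range'_append_1]
  exact hσ.append hτ'

theorem idxOf_one_append_lt (hσ : σ.Perm (List.range' 1 N)) (hN : 0 < N) (l : List ℕ) :
    (σ ++ l).idxOf 1 < N := by
  have h1 : 1 ∈ σ := hσ.mem_iff.mpr (mem_range'_one_iff.mpr ⟨le_rfl, by omega⟩)
  have h1σ := List.idxOf_lt_length_iff.mpr h1
  rw [hσ.length_eq, List.length_range'] at h1σ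
  rwa [List.idxOf_append_of_mem h1]

theorem le_idxOf_add_one_append (hσ : σ.Perm (List.range' 1 N)) (l : List ℕ) :
    N ≤ (σ ++ l).idxOf (N + 1) := by
  have h : N + 1 ∉ σ := fun h => by have := mem_range'_one_iff.mp (hσ.subset h); omega
  rw [List.idxOf_append_of_notMem h, hσ.length_eq, List.length_range']
  omega

end Brackets

def EveryoneCanWin (k : ℕ) (b : ℕ → ℕ → Bool) : Prop :=
  ∀ i ∈ List.range' 1 (2^k),
    ∃ π : List ℕ, π.Perm (List.range' 1 (2^k)) ∧ knockWinner k b π = i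

theorem everyoneCanWin_eta_zero : EveryoneCanWin 3 (eta 0) := by
  intro i hi
  obtain ⟨h1, h8⟩ := mem_range'_one_iff.mp hi
  interval_cases i
  · exact ⟨[1,2,3,4,5,6,7,8], by decide, by decide⟩
  · exact ⟨[1,3,4,5,2,6,7,8], by decide, by decide⟩
  · exact ⟨[1,2,4,5,3,8,6,7], by decide, by decide⟩
  · exact ⟨[1,2,3,6,4,8,5,7], by decide, by decide⟩
  · exact ⟨[1,3,4,6,2,5,7,8], by decide, by decide⟩
  · exact ⟨[1,2,3,4,5,8,6,7], by decide, by decide⟩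
  · exact ⟨[1,2,3,6,4,5,7,8], by decide, by decide⟩
  · exact ⟨[1,3,2,8,4,6,5,7], by decide, by decide⟩

theorem knockWinner_eta_succ_append {m : ℕ} {σ τ : List ℕ}
    (hσ : σ.Perm (List.range' 1 (2^(m+3)))) (hτ : τ.Perm (List.range' 1 (2^(m+3)))) :
    knockWinner (m+4) (eta (m+1)) (σ ++ τ.map (2^(m+3) + ·)) =
      if (knockWinner (m+3) (eta m) σ + knockWinner (m+3) (eta m) τ) % 2 = 0
      then knockWinner (m+3) (eta m) σ else 2^(m+3) + knockWinner (m+3) (eta m) τ := by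
  have hσl : σ.length = 2^(m+3) := by simp [hσ.length_eq]
  have hτl : τ.length = 2^(m+3) := by simp [hτ.length_eq]
  have hσ' : ∀ x ∈ σ, 0 < x ∧ x ≤ 2^(m+3) := fun _ h => mem_range'_one_iff.mp (hσ.subset h)
  have hτ' : ∀ x ∈ τ, 0 < x ∧ x ≤ 2^(m+3) := fun _ h => mem_range'_one_iff.mp (hτ.subset h)
  have hlow : knockWinner (m+3) (eta (m+1)) σ = knockWinner (m+3) (eta m) σ :=
    knockWinner_congr _ _ _ σ fun x hx y hy => eta_succ_of_le (hσ' x hx).2 (hσ' y hy).2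
  have hup : knockWinner (m+3) (eta (m+1)) (τ.map (2^(m+3) + ·)) =
      2^(m+3) + knockWinner (m+3) (eta m) τ :=
    knockWinner_map _ _ _ _ hτl fun x hx y hy => eta_succ_add_add (hτ' x hx).1 (hτ' y hy).1
  have hx := hσ' _ (knockWinner_mem (eta m) (m+3) hσl)
  have hy := hτ' _ (knockWinner_mem (eta m) (m+3) hτl)
  rw [knockWinner_succ_append _ _ hσl (by simpa using hτl), hlow, hup,
    eta_succ_of_le_of_lt hx.2 (by omega)]
  set x := knockWinner (m+3) (eta m) σ
  set y := knockWinner (m+3) (eta m) τ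
  have hpar : (x + (2^(m+3) + y)) % 2 = 0 ↔ (x + y) % 2 = 0 := by
    have : 2^(m+3) % 2 = 0 := by simp [Nat.pow_mod]
    omega
  simp only [decide_eq_true_eq, hpar]

theorem exists_append_map_add_knockWinner_eta_succ {m : ℕ} (H : EveryoneCanWin (m+3) (eta m))
    {i : ℕ} (hi : i ∈ List.range' 1 (2^(m+4))) :
    ∃ σ τ : List ℕ, σ.Perm (List.range' 1 (2^(m+3))) ∧
      τ.Perm (List.range' 1 (2^(m+3))) ∧
      knockWinner (m+4) (eta (m+1)) (σ ++ τ.map (2^(m+3) + ·)) = i := by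
  have hi' := mem_range'_one_iff.mp hi
  have hN : 2 ≤ 2^(m+3) := Nat.le_self_pow (by omega) 2
  rw [pow_succ] at hi'
  by_cases hlow : i ≤ 2^(m+3)
  · obtain ⟨σ, hσ, hwin⟩ := H i (mem_range'_one_iff.mpr ⟨hi'.1, hlow⟩)
    refine ⟨σ, σ, hσ, hσ, ?_⟩
    rw [knockWinner_eta_succ_append hσ hσ, hwin, if_pos (by omega)]
  · obtain ⟨τ, hτ, hwinτ⟩ :=
      H (i - 2^(m+3)) (mem_range'_one_iff.mpr ⟨by omega, by omega⟩)
    -- the lower half is won by `1` or `2`, whichever has parity opposite to `i - 2^(m+3)`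
    obtain ⟨σ, hσ, hwinσ⟩ :=
      H ((i - 2^(m+3)) % 2 + 1) (mem_range'_one_iff.mpr ⟨by omega, by omega⟩)
    refine ⟨σ, τ, hσ, hτ, ?_⟩
    rw [knockWinner_eta_succ_append hσ hτ, hwinσ, hwinτ, if_neg (by omega)]
    omega

theorem everyoneCanWin_eta : ∀ m : ℕ, EveryoneCanWin (m+3) (eta m)
  | 0 => everyoneCanWin_eta_zero
  | m+1 => fun _ hi => by
    obtain ⟨σ, τ, hσ, hτ, hwin⟩ :=
      exists_append_map_add_knockWinner_eta_succ (everyoneCanWin_eta m) hi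
    exact ⟨_, Nat.two_pow_succ (m+3) ▸ perm_append_map_add hσ hτ, hwin⟩

/-- Remark 1, top seeds: for `n ≥ 4`, even under the constraint that candidates `1` and
`2^(n-1)+1` are placed in opposite halves of the bracket (so they can only meet in the
final round), every candidate `i ∈ {1,…,2^n}` can win the knockout tournament under
`η_{n-3}`. Positions in the list are 0-based, so the first half consists of the
positions `< 2^(n-1)`. -/
theorem stmt16 (n : ℕ) (hn : 4 ≤ n) (i : ℕ) (hi : i ∈ List.range' 1 (2^n)) :
    ∃ π : List ℕ, π.Perm (List.range' 1 (2^n)) ∧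
      ¬ ((π.idxOf 1 < 2^(n-1)) ↔ (π.idxOf (2^(n-1)+1) < 2^(n-1))) ∧
      knockWinner n (eta (n-3)) π = i := by
  obtain ⟨m, rfl⟩ : ∃ m, n = m + 4 := ⟨n - 4, by omega⟩
  obtain ⟨σ, τ, hσ, hτ, hwin⟩ :=
    exists_append_map_add_knockWinner_eta_succ (everyoneCanWin_eta m) hi
  have hone := idxOf_one_append_lt hσ (by positivity) (τ.map (2^(m+3) + ·))
  have hother := le_idxOf_add_one_append hσ (τ.map (2^(m+3) + ·))
  refine ⟨_, Nat.two_pow_succ (m+3) ▸ perm_append_map_add hσ hτ, ?_, hwin⟩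
  simp only [show m + 4 - 1 = m + 3 from rfl]
  omega
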